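/- If the constructed parallel token swapping instance has a K-round solution, where K = 8n, then the Star STS instance is a YES instance. -/

import Mathlib

namespace ParallelTS

/-!
Construction (parallel): given a Star STS instance with slots `1,…,m` (encoded as
`Fin m`), items `0,…,m` (encoded as `Option (Fin m)`, `none` = item 0), target
permutation `π` and swap sequence `s₁,…,sₙ` (`s : Fin n → Fin m`), set `K = 8n` and
build a subdivided star with root `r` and branches: swap branches `w¹,…,wⁿ`, slot
branches `s¹,…,s^{m+n}` and garbage branches `g`, `g′`, each a path of `K` vertices.
-/

/-- The branches: swap branches `wᵗ` (`Sum.inl`), slot branches `sⁱ`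
(`Sum.inr (Sum.inl _)`), and the garbage branches `g = Sum.inr (Sum.inr false)` and
`g′ = Sum.inr (Sum.inr true)`. -/
abbrev Branch (m n : ℕ) := Fin n ⊕ Fin (m + n) ⊕ Bool

/-- Vertices of the subdivided star: `none` is the root `r`; `some (b, j)` is the
vertex `b_{j+1}` of branch `b` at distance `j+1` from the root.  (The coordinate `j`
ranges over all of `ℕ`; the graph below only has edges between the root and the first
`K` vertices of each branch, so the remaining vertices are isolated and carry no
tokens.) -/
abbrev PV (m n : ℕ) := Option (Branch m n × ℕ)

/-- Adjacency generator for the subdivided star with branches of length `K = 8n`. -/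
def prel {m n : ℕ} : PV m n → PV m n → Prop
  | none, some (_, j) => j = 0 ∧ 0 < 8 * n
  | some (b, j), some (b', j') => b = b' ∧ j' = j + 1 ∧ j' < 8 * n
  | _, _ => False

/-- The subdivided star, as a simple graph. -/
def PGraph (m n : ℕ) : SimpleGraph (PV m n) := SimpleGraph.fromRel prel

/-- Swap the two values `e.1`, `e.2`. -/
def swapV {V : Type*} [DecidableEq V] (e : V × V) (v : V) : V :=
  if v = e.1 then e.2 else if v = e.2 then e.1 else v

/-- Trajectory of the vertex `v` under a schedule of rounds, each round being a list
of (disjoint) swaps. -/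
def applySched {V : Type*} [DecidableEq V] (sched : List (List (V × V))) (v : V) : V :=
  sched.foldl (fun v R => R.foldl (fun v e => swapV e v) v) v

/-- Two swaps do not share a vertex. -/
def NoShare {V : Type*} (e f : V × V) : Prop :=
  e.1 ≠ f.1 ∧ e.1 ≠ f.2 ∧ e.2 ≠ f.1 ∧ e.2 ≠ f.2

/-- Apply a sequence of star swaps (each given by a leaf) to a placement on the star
with center `none` and leaves `some l`. -/
def starApply {L : Type*} [DecidableEq L] (σ : List L) (f : Option L → Option L) :
    Option L → Option L :=
  σ.foldl (fun g l => fun t => swapV ((none : Option L), some l) (g t)) f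

/-- The Star STS instance is a YES instance. -/
def StarSTSYes {L : Type*} [DecidableEq L] (π : Equiv.Perm (Option L)) (σ : List L) : Prop :=
  ∃ σ' : List L, σ'.Sublist σ ∧ starApply σ' id = ⇑π

variable {m n : ℕ}

/-- `a(i,t)`: the index of the slot branch representing slot `i` after `t` steps:
`a(i,0) = i`, and `a(i,t) = a(i,t-1)` for `i ≠ s_t` while `a(s_t,t) = m + t`
(`1`-indexed; below everything is `0`-indexed). -/
def aFun (s : Fin n → Fin m) : ℕ → Fin m → Fin (m + n)
  | 0, i => ⟨i.val, Nat.lt_of_lt_of_le i.isLt (Nat.le_add_right m n)⟩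
  | t + 1, i =>
      if h : t < n then
        (if s ⟨t, h⟩ = i then ⟨m + t, Nat.add_lt_add_left h m⟩ else aFun s t i)
      else aFun s t i

/-- The enforcement tokens are indexed by `(t, r) : Fin n × Fin 4`; the token
`e_{(t,r)}` is `e_d` for the odd number `d = 8t + 2r + 1`. -/
def dOf (t : Fin n) (r : Fin 4) : ℕ := 8 * t.val + 2 * r.val + 1

/-- The starting branch `x^d` of enforcement token `e_d`, `d = 8t+2r+1`:
`x^{8T-7} = x^{8T-5} = w^T`, `x^{8T-3} = g′`, `x^{8T-1} = s^{m+T}` (where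
`T = t+1`). -/
def xB (s : Fin n → Fin m) (t : Fin n) (r : Fin 4) : Branch m n :=
  if r.val ≤ 1 then Sum.inl t
  else if r.val = 2 then Sum.inr (Sum.inr true)
  else Sum.inr (Sum.inl ⟨m + t.val, Nat.add_lt_add_left t.isLt m⟩)

/-- The destination branch `y^d` of enforcement token `e_d`, `d = 8t+2r+1`:
`y^{8T-7} = s^{a(s_T, T-1)}`, `y^{8T-5} = g`, `y^{8T-3} = y^{8T-1} = w^T` (where
`T = t+1`). -/
def yB (s : Fin n → Fin m) (t : Fin n) (r : Fin 4) : Branch m n :=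
  if r.val = 0 then Sum.inr (Sum.inl (aFun s t.val (s t)))
  else if r.val = 1 then Sum.inr (Sum.inr false)
  else Sum.inl t

/-- Initial vertex of item token `o`: the root for item `0`, the vertex `sⁱ₁` for
item `i`. -/
def itemInit (s : Fin n → Fin m) : Option (Fin m) → PV m n
  | none => none
  | some i => some (Sum.inr (Sum.inl (aFun s 0 i)), 0)

/-- Initial vertex of the enforcement token `e_d`, namely `x^d_d`. -/
def enfInit (s : Fin n → Fin m) (t : Fin n) (r : Fin 4) : PV m n :=
  some (xB s t r, dOf t r - 1)

/-- A vertex initially occupied by an item or enforcement token. -/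
def Occupied (s : Fin n → Fin m) (v : PV m n) : Prop :=
  (∃ o : Option (Fin m), itemInit s o = v) ∨
    (∃ tr : Fin n × Fin 4, enfInit s tr.1 tr.2 = v)

/-- The tokens of the parallel instance: item tokens, enforcement tokens, and one
filler token for each initially unoccupied vertex. -/
abbrev PTok (s : Fin n → Fin m) :=
  Option (Fin m) ⊕ (Fin n × Fin 4) ⊕ {v : PV m n // ¬ Occupied s v}

/-- Initial placement of all tokens. -/
def initP (s : Fin n → Fin m) : PTok s → PV m n
  | Sum.inl o => itemInit s o
  | Sum.inr (Sum.inl (t, r)) => enfInit s t r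
  | Sum.inr (Sum.inr v) => v.val

/-- Position of the enforcement token with branches `xb`, `yb` and starting distance
`d` after `τ` rounds of the scaffold solution: it moves one step toward its target in
every round, reaching the root after round `d`. -/
def posE (xb yb : Branch m n) (d τ : ℕ) : PV m n :=
  if τ < d then some (xb, d - τ - 1)
  else if τ = d then none
  else some (yb, τ - d - 1)

/-- The scaffold solution: the `K = 8n`-round schedule whose round `τ+1` swaps each
enforcement token one step along the path toward its target. -/
def scaffold (s : Fin n → Fin m) : List (List (PV m n × PV m n)) :=
  List.ofFn fun τ : Fin (8 * n) =>
    (List.ofFn fun t : Fin n =>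
      List.ofFn fun r : Fin 4 =>
        (posE (xB s t r) (yB s t r) (dOf t r) τ.val,
          posE (xB s t r) (yB s t r) (dOf t r) (τ.val + 1))).flatten

/-- Target placement of all tokens: item token `o` goes to the root if `π o = 0` and
to `s^{a(π o, n)}₁` otherwise; enforcement token `e_d` goes to `y^d_{K-d}`; each
filler token goes to the final vertex of its initial vertex under the scaffold
solution. -/
def tgtP (s : Fin n → Fin m) (π : Equiv.Perm (Option (Fin m))) : PTok s → PV m n
  | Sum.inl o =>
      (match π o with
        | none => none
        | some i => some (Sum.inr (Sum.inl (aFun s n i)), 0))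
  | Sum.inr (Sum.inl (t, r)) => some (yB s t r, 8 * n - dOf t r - 1)
  | Sum.inr (Sum.inr v) => applySched (scaffold s) v.val

/-- `sched` is a solution of the parallel token swapping instance using at most `K`
rounds: at most `K` rounds, every round is a matching of edges of the graph, and the
schedule brings every token from its initial vertex to its target vertex. -/
def IsSolution (s : Fin n → Fin m) (π : Equiv.Perm (Option (Fin m)))
    (K : ℕ) (sched : List (List (PV m n × PV m n))) : Prop :=
  sched.length ≤ K ∧
  (∀ R ∈ sched, (∀ e ∈ R, (PGraph m n).Adj e.1 e.2) ∧ R.Pairwise NoShare) ∧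
  ∀ t : PTok s, applySched sched (initP s t) = tgtP s π t

end ParallelTS

/-!
An enforcement token `e_d` has to cover the distance `K` between its start and its target in
`K` rounds, so it walks the geodesic through the root on schedule. Hence, in every solution,
round `d - 1` swaps the root with `x^d_1` and round `d` swaps it with `y^d_1`. By induction on
`t`, after `8t` rounds the item tokens occupy the root and the first vertices of the slot
branches `s^{a(i,t)}` exactly as the star configuration of some subsequence of
`s_1, …, s_t` prescribes. In block `t` the token at the root and the token on `s^{a(s_t,t)}`
are both pushed onto `w^t` and must leave it in rounds `8t + 5` and `8t + 7`; the one leaving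
first lands on the fresh slot branch `s^{m+t}`, the other ends at the root, and the order
decides whether the swap `s_t` is taken.
-/

namespace ParallelTS

section Rounds

variable {V : Type*}

def IsMatchingSchedule (G : SimpleGraph V) (sched : List (List (V × V))) : Prop :=
  ∀ R ∈ sched, (∀ e ∈ R, G.Adj e.1 e.2) ∧ R.Pairwise NoShare

theorem IsMatchingSchedule.getD {G : SimpleGraph V} {sched : List (List (V × V))}
    (h : IsMatchingSchedule G sched) (τ : ℕ) :
    (∀ e ∈ sched.getD τ [], G.Adj e.1 e.2) ∧ (sched.getD τ []).Pairwise NoShare := by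
  rw [List.getD_eq_getElem?_getD]
  cases hτ : sched[τ]? with
  | none => simp
  | some R => exact h R (List.mem_of_getElem? hτ)

variable [DecidableEq V]

theorem swapV_eq_swap (e : V × V) : swapV e = Equiv.swap e.1 e.2 := by
  funext v
  rw [Equiv.swap_apply_def]
  rfl

def applyRound (R : List (V × V)) (v : V) : V := R.foldl (fun v e => swapV e v) v

theorem applyRound_cons (e : V × V) (R : List (V × V)) (v : V) :
    applyRound (e :: R) v = applyRound R (swapV e v) := rfl

theorem applyRound_injective (R : List (V × V)) : Function.Injective (applyRound R) := by
  induction R with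
  | nil => exact fun _ _ h => h
  | cons e R ih =>
    intro a b h
    simp only [applyRound_cons, swapV_eq_swap] at h
    exact (Equiv.swap e.1 e.2).injective (ih h)

theorem applyRound_eq_self {R : List (V × V)} {v : V} (hv : ∀ e ∈ R, v ≠ e.1 ∧ v ≠ e.2) :
    applyRound R v = v := by
  induction R with
  | nil => rfl
  | cons e R ih =>
    obtain ⟨h1, h2⟩ := hv e List.mem_cons_self
    rw [applyRound_cons, show swapV e v = v by simp [swapV, h1, h2]]
    exact ih fun f hf => hv f (List.mem_cons_of_mem e hf)

theorem applyRound_of_mem {R : List (V × V)} (hR : R.Pairwise NoShare) {e : V × V}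
    (he : e ∈ R) : applyRound R e.1 = e.2 ∧ applyRound R e.2 = e.1 := by
  induction R with
  | nil => simp at he
  | cons f R ih =>
    obtain ⟨hf, hR⟩ := List.pairwise_cons.1 hR
    rcases List.mem_cons.1 he with rfl | he
    · simp only [applyRound_cons, swapV_eq_swap, Equiv.swap_apply_left, Equiv.swap_apply_right]
      exact ⟨applyRound_eq_self fun g hg => ⟨(hf g hg).2.2.1, (hf g hg).2.2.2⟩,
        applyRound_eq_self fun g hg => ⟨(hf g hg).1, (hf g hg).2.1⟩⟩
    · obtain ⟨h11, h12, h21, h22⟩ := hf e he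
      rw [applyRound_cons, applyRound_cons, show swapV f e.1 = e.1 by simp [swapV, Ne.symm h11,
        Ne.symm h21], show swapV f e.2 = e.2 by simp [swapV, Ne.symm h12, Ne.symm h22]]
      exact ih hR he

theorem applyRound_eq_self_or_mem {R : List (V × V)} (hR : R.Pairwise NoShare) (v : V) :
    applyRound R v = v ∨ ∃ e ∈ R, (v = e.1 ∧ applyRound R v = e.2) ∨
      (v = e.2 ∧ applyRound R v = e.1) := by
  by_cases h : ∀ e ∈ R, v ≠ e.1 ∧ v ≠ e.2
  · exact Or.inl (applyRound_eq_self h)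
  · push Not at h
    obtain ⟨e, he, hv⟩ := h
    obtain ⟨h1, h2⟩ := applyRound_of_mem hR he
    by_cases hv1 : v = e.1
    · exact Or.inr ⟨e, he, Or.inl ⟨hv1, hv1 ▸ h1⟩⟩
    · exact Or.inr ⟨e, he, Or.inr ⟨hv hv1, hv hv1 ▸ h2⟩⟩

theorem applyRound_involutive {R : List (V × V)} (hR : R.Pairwise NoShare) :
    Function.Involutive (applyRound R) := by
  intro v
  rcases applyRound_eq_self_or_mem hR v with h | ⟨e, he, ⟨rfl, h⟩ | ⟨rfl, h⟩⟩
  · rw [h, h]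
  · rw [h, (applyRound_of_mem hR he).2]
  · rw [h, (applyRound_of_mem hR he).1]

def traj (sched : List (List (V × V))) (v : V) (τ : ℕ) : V := applySched (sched.take τ) v

variable {G : SimpleGraph V} {sched : List (List (V × V))}

@[simp] theorem traj_zero (v : V) : traj sched v 0 = v := rfl

-- Past the end of the schedule the rounds are empty (`getD`), so this holds at every time.
theorem traj_succ (v : V) (τ : ℕ) :
    traj sched v (τ + 1) = applyRound (sched.getD τ []) (traj sched v τ) := by
  rw [traj, traj, List.take_add_one, applySched, List.foldl_append, List.getD_eq_getElem?_getD]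
  cases sched[τ]? <;> rfl

theorem traj_of_length_le {τ : ℕ} (h : sched.length ≤ τ) (v : V) :
    traj sched v τ = applySched sched v := by
  rw [traj, List.take_of_length_le h]

theorem traj_injective (τ : ℕ) : Function.Injective (traj sched · τ) := by
  induction τ with
  | zero => exact fun _ _ h => h
  | succ τ ih =>
    intro a b h
    simp only [traj_succ] at h
    exact ih (applyRound_injective _ h)

theorem IsMatchingSchedule.traj_succ_eq_or_adj (h : IsMatchingSchedule G sched) (v : V)
    (τ : ℕ) : traj sched v (τ + 1) = traj sched v τ ∨
      G.Adj (traj sched v τ) (traj sched v (τ + 1)) := by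
  obtain ⟨hadj, hR⟩ := h.getD τ
  rw [traj_succ]
  rcases applyRound_eq_self_or_mem hR (traj sched v τ) with h | ⟨e, he, ⟨h1, h2⟩ | ⟨h1, h2⟩⟩
  · exact Or.inl h
  · rw [h2, h1]; exact Or.inr (hadj e he)
  · rw [h2, h1]; exact Or.inr (hadj e he).symm

theorem IsMatchingSchedule.traj_succ_of_swap (h : IsMatchingSchedule G sched) {u v x y : V}
    {τ : ℕ} (hu : traj sched u τ = x) (hu' : traj sched u (τ + 1) = y)
    (hv : traj sched v τ = y) : traj sched v (τ + 1) = x := by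
  rw [traj_succ] at hu' ⊢
  rw [hv, ← hu', applyRound_involutive (h.getD τ).2, hu]

theorem IsMatchingSchedule.traj_of_swap (h : IsMatchingSchedule G sched) {u v x y : V}
    {τ : ℕ} (hu : traj sched u τ = x) (hu' : traj sched u (τ + 1) = y)
    (hv : traj sched v (τ + 1) = x) : traj sched v τ = y := by
  rw [traj_succ] at hu' hv
  rw [← applyRound_involutive (h.getD τ).2 (traj sched v τ), hv, ← hu, hu']

theorem IsMatchingSchedule.traj_lipschitz (h : IsMatchingSchedule G sched) (f : V → ℕ)
    (hf : ∀ u v, G.Adj u v → f u ≤ f v + 1) (v : V) {τ₁ τ₂ : ℕ} (h12 : τ₁ ≤ τ₂) :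
    f (traj sched v τ₁) ≤ f (traj sched v τ₂) + (τ₂ - τ₁) ∧
      f (traj sched v τ₂) ≤ f (traj sched v τ₁) + (τ₂ - τ₁) := by
  induction τ₂, h12 using Nat.le_induction with
  | base => simp
  | succ τ₂ h12 ih =>
    rcases h.traj_succ_eq_or_adj v τ₂ with hs | hs
    · rw [hs]; omega
    · have := hf _ _ hs
      have := hf _ _ hs.symm
      omega

end Rounds

section StarGraph

variable {m n : ℕ}

def OnBranch (b : Branch m n) (p : PV m n) : Prop := ∃ c, p = some (b, c)

theorem PGraph_adj_cases {u v : PV m n} (h : (PGraph m n).Adj u v) :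
    (∃ b, (u = none ∧ v = some (b, 0)) ∨ (u = some (b, 0) ∧ v = none)) ∨
      ∃ b j, (u = some (b, j) ∧ v = some (b, j + 1)) ∨ (u = some (b, j + 1) ∧ v = some (b, j)) := by
  rw [PGraph, SimpleGraph.fromRel_adj] at h
  obtain ⟨-, h⟩ := h
  rcases u with _ | ⟨b, j⟩ <;> rcases v with _ | ⟨b', j'⟩ <;>
    simp only [prel, or_false, false_or] at h
  · exact Or.inl ⟨b', Or.inl ⟨rfl, by rw [h.1]⟩⟩
  · exact Or.inl ⟨b, Or.inr ⟨by rw [h.1], rfl⟩⟩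
  · obtain ⟨rfl, rfl, -⟩ | ⟨rfl, rfl, -⟩ := h
    · exact Or.inr ⟨_, _, Or.inl ⟨rfl, rfl⟩⟩
    · exact Or.inr ⟨_, _, Or.inr ⟨rfl, rfl⟩⟩

theorem PGraph_adj_some {b : Branch m n} {c : ℕ} {p : PV m n}
    (h : (PGraph m n).Adj (some (b, c)) p) : (c = 0 ∧ p = none) ∨ OnBranch b p := by
  rcases PGraph_adj_cases h with ⟨b', ⟨h1, -⟩ | ⟨h1, rfl⟩⟩ | ⟨b', j, ⟨h1, rfl⟩ | ⟨h1, rfl⟩⟩ <;>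
    simp only [Option.some.injEq, Prod.mk.injEq, reduceCtorEq] at h1
  · exact Or.inl ⟨h1.2, rfl⟩
  · exact Or.inr ⟨_, by rw [h1.1]⟩
  · exact Or.inr ⟨_, by rw [h1.1]⟩

def starDist : PV m n → PV m n → ℕ
  | none, none => 0
  | none, some (_, j) => j + 1
  | some (_, j), none => j + 1
  | some (b, j), some (b', j') => if b = b' then (j - j') + (j' - j) else j + j' + 2

@[simp] theorem starDist_self (v : PV m n) : starDist v v = 0 := by
  rcases v with _ | ⟨b, j⟩ <;> simp [starDist]

theorem starDist_le_of_adj (w : PV m n) {u v : PV m n} (h : (PGraph m n).Adj u v) :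
    starDist w u ≤ starDist w v + 1 := by
  rcases PGraph_adj_cases h with ⟨b, ⟨rfl, rfl⟩ | ⟨rfl, rfl⟩⟩ | ⟨b, j, ⟨rfl, rfl⟩ | ⟨rfl, rfl⟩⟩ <;>
    rcases w with _ | ⟨b', j'⟩ <;> simp only [starDist] <;> (try split_ifs) <;> omega

theorem eq_posE_of_starDist_le {x y : Branch m n} (hxy : x ≠ y) {d K τ : ℕ} (hd : 1 ≤ d)
    (hdK : d < K) (hτK : τ ≤ K) {p : PV m n} (h₁ : starDist (some (x, d - 1)) p ≤ τ)
    (h₂ : starDist (some (y, K - d - 1)) p ≤ K - τ) : p = posE x y d τ := by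
  rcases p with _ | ⟨b, c⟩
  · simp only [starDist] at h₁ h₂
    rw [posE, if_neg (by omega), if_pos (by omega)]
  · simp only [starDist] at h₁ h₂
    by_cases hbx : x = b
    · subst hbx
      rw [if_pos rfl] at h₁
      rw [if_neg (Ne.symm hxy)] at h₂
      rw [posE, if_pos (by omega), show c = d - τ - 1 by omega]
    · rw [if_neg hbx] at h₁
      by_cases hby : y = b
      · subst hby
        rw [if_pos rfl] at h₂
        rw [posE, if_neg (by omega), if_neg (by omega), show c = τ - d - 1 by omega]
      · rw [if_neg hby] at h₂
        omega

variable {sched : List (List (PV m n × PV m n))}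

theorem IsMatchingSchedule.exists_exit (h : IsMatchingSchedule (PGraph m n) sched)
    (v : PV m n) (b : Branch m n) {τ₁ τ₂ : ℕ} (h12 : τ₁ ≤ τ₂)
    (h₁ : OnBranch b (traj sched v τ₁)) (h₂ : ¬ OnBranch b (traj sched v τ₂)) :
    ∃ ρ, τ₁ ≤ ρ ∧ ρ < τ₂ ∧ traj sched v ρ = some (b, 0) ∧ traj sched v (ρ + 1) = none := by
  induction τ₂, h12 using Nat.le_induction with
  | base => exact absurd h₁ h₂
  | succ τ₂ h12 ih =>
    by_cases hτ₂ : OnBranch b (traj sched v τ₂)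
    · obtain ⟨c, hc⟩ := hτ₂
      rcases h.traj_succ_eq_or_adj v τ₂ with hs | hs
      · exact absurd ⟨c, hs.trans hc⟩ h₂
      · rw [hc] at hs
        rcases PGraph_adj_some hs with ⟨rfl, hnone⟩ | hb
        · exact ⟨τ₂, h12, by omega, hc, hnone⟩
        · exact absurd hb h₂
    · obtain ⟨ρ, h1, h2, h3⟩ := ih hτ₂
      exact ⟨ρ, h1, by omega, h3⟩

end StarGraph

section Construction

variable {m n : ℕ} (s : Fin n → Fin m)

theorem aFun_lt (t : ℕ) (i : Fin m) : (aFun s t i : ℕ) < m + t := by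
  induction t with
  | zero => exact i.isLt
  | succ t ih =>
    rw [aFun]
    split_ifs <;> (try rw [Fin.val_mk]) <;> omega

theorem aFun_injective (t : ℕ) : Function.Injective (aFun s t) := by
  induction t with
  | zero => intro i j h; simpa [aFun, Fin.ext_iff] using h
  | succ t ih =>
    intro i j h
    have hi := aFun_lt s t i
    have hj := aFun_lt s t j
    simp only [aFun] at h
    split_ifs at h with ht hsi hsj hsj <;> simp only [Fin.ext_iff] at h
    · exact hsi.symm.trans hsj
    · omega
    · omega
    · exact ih (Fin.ext h)
    · exact ih (Fin.ext h)

theorem aFun_succ_self (t : Fin n) : aFun s (t + 1) (s t) = ⟨m + t, by omega⟩ := by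
  simp [aFun]

theorem aFun_succ_of_ne (t : Fin n) {i : Fin m} (hi : s t ≠ i) :
    aFun s (t + 1) i = aFun s t i := by
  simp [aFun, hi]

-- Once `s_t` has been swapped out, its old slot branch is never used again.
theorem aFun_ne_of_lt (t : Fin n) {t' : ℕ} (h : (t : ℕ) < t') (i : Fin m) :
    aFun s t' i ≠ aFun s t (s t) := by
  have hlt := aFun_lt s t (s t)
  induction t', h using Nat.le_induction with
  | base =>
    by_cases hi : s t = i
    · rw [← hi, aFun_succ_self]; simp only [ne_eq, Fin.ext_iff]; omega
    · rw [aFun_succ_of_ne s t hi]; exact fun h => hi (aFun_injective s t h).symm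
  | succ t' h ih =>
    rw [aFun]
    split_ifs
    · simp only [ne_eq, Fin.ext_iff]; omega
    · exact ih
    · exact ih

theorem aFun_self_injective {t t' : Fin n} (h : aFun s t' (s t') = aFun s t (s t)) : t' = t := by
  rcases lt_trichotomy (t : ℕ) t' with hlt | heq | hgt
  · exact absurd h (aFun_ne_of_lt s t hlt _)
  · exact (Fin.ext heq).symm
  · exact absurd h.symm (aFun_ne_of_lt s t' hgt _)

theorem dOf_pos (t : Fin n) (r : Fin 4) : 1 ≤ dOf t r := by
  simp [dOf]

theorem dOf_lt (t : Fin n) (r : Fin 4) : dOf t r < 8 * n := by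
  have := t.isLt; have := r.isLt; simp only [dOf]; omega

theorem exists_dOf_eq {ρ : ℕ} (hodd : ρ % 2 = 1) (hρ : ρ < 8 * n) :
    ∃ (t : Fin n) (r : Fin 4), dOf t r = ρ :=
  ⟨⟨ρ / 8, by omega⟩, ⟨ρ % 8 / 2, by omega⟩, by simp only [dOf]; omega⟩

theorem xB_ne_yB (t : Fin n) (r : Fin 4) : xB s t r ≠ yB s t r := by
  fin_cases r <;> simp [xB, yB]

theorem itemInit_ne_enfInit (o : Option (Fin m)) (t : Fin n) (r : Fin 4) :
    itemInit s o ≠ enfInit s t r := by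
  rcases o with _ | i
  · simp [itemInit, enfInit]
  · have := i.isLt
    simp only [itemInit, enfInit, xB, aFun, ne_eq, Option.some.injEq, Prod.mk.injEq, not_and]
    split_ifs <;> simp [Fin.ext_iff]
    omega

theorem itemInit_injective : Function.Injective (itemInit s) := by
  rintro (_ | i) (_ | j) h <;> simp_all [itemInit, aFun, Fin.ext_iff]

theorem yB_eq_inl_iff (t t' : Fin n) (r : Fin 4) :
    yB s t r = Sum.inl t' ↔ 2 ≤ (r : ℕ) ∧ t = t' := by
  unfold yB
  split_ifs <;> simp only [Sum.inl.injEq, false_iff, iff_and_self, not_and] <;> omega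

theorem yB_eq_slot_iff (t : Fin n) (r : Fin 4) (k : Fin (m + n)) :
    yB s t r = Sum.inr (Sum.inl k) ↔ (r : ℕ) = 0 ∧ aFun s t (s t) = k := by
  unfold yB
  split_ifs <;> simp_all

end Construction

section StarConfiguration

variable {L : Type*} [DecidableEq L]

theorem starApply_append_singleton (σ : List L) (l : L) (f : Option L → Option L) :
    starApply (σ ++ [l]) f = fun x => swapV (none, some l) (starApply σ f x) := by
  simp [starApply, List.foldl_append]

theorem starApply_bijective (σ : List L) {f : Option L → Option L}
    (hf : Function.Bijective f) : Function.Bijective (starApply σ f) := by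
  induction σ generalizing f with
  | nil => exact hf
  | cons l σ ih =>
    refine ih (f := swapV (none, some l) ∘ f) ?_
    rw [swapV_eq_swap]
    exact (Equiv.bijective _).comp hf

end StarConfiguration

section Solution

variable {m n : ℕ} {s : Fin n → Fin m} {π : Equiv.Perm (Option (Fin m))}
  {sched : List (List (PV m n × PV m n))}

theorem IsSolution.isMatchingSchedule (hsol : IsSolution s π (8 * n) sched) :
    IsMatchingSchedule (PGraph m n) sched :=
  hsol.2.1

theorem IsSolution.traj_final (hsol : IsSolution s π (8 * n) sched) (x : PTok s) :
    traj sched (initP s x) (8 * n) = tgtP s π x := by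
  rw [traj_of_length_le hsol.1]
  exact hsol.2.2 x

-- The start and target of `e_d` are at distance `K`, so `e_d` must move along the geodesic.
theorem IsSolution.traj_enfInit (hsol : IsSolution s π (8 * n) sched) (t : Fin n)
    (r : Fin 4) {τ : ℕ} (hτ : τ ≤ 8 * n) :
    traj sched (enfInit s t r) τ = posE (xB s t r) (yB s t r) (dOf t r) τ := by
  have hfinal : traj sched (enfInit s t r) (8 * n) = some (yB s t r, 8 * n - dOf t r - 1) :=
    hsol.traj_final (Sum.inr (Sum.inl (t, r)))
  have hadj : ∀ w u v, (PGraph m n).Adj u v → starDist w u ≤ starDist w v + 1 :=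
    fun w _ _ => starDist_le_of_adj w
  have h₁ := (hsol.isMatchingSchedule.traj_lipschitz _ (hadj (enfInit s t r))
    (enfInit s t r) (Nat.zero_le τ)).2
  have h₂ := (hsol.isMatchingSchedule.traj_lipschitz _
    (hadj (some (yB s t r, 8 * n - dOf t r - 1))) (enfInit s t r) hτ).1
  rw [traj_zero, starDist_self] at h₁
  rw [hfinal, starDist_self] at h₂
  exact eq_posE_of_starDist_le (xB_ne_yB s t r) (dOf_pos t r) (dOf_lt t r) hτ
    (by simpa [enfInit] using h₁) (by simpa using h₂)

theorem IsSolution.traj_dOf_of_root (hsol : IsSolution s π (8 * n) sched) (t : Fin n)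
    (r : Fin 4) {v : PV m n} (hv : traj sched v (dOf t r - 1) = none) :
    traj sched v (dOf t r) = some (xB s t r, 0) := by
  have hd := dOf_pos t r
  have hd' := dOf_lt t r
  obtain ⟨ρ, hρ⟩ : ∃ ρ, dOf t r = ρ + 1 := ⟨dOf t r - 1, by omega⟩
  rw [hρ, Nat.add_sub_cancel] at hv
  rw [hρ]
  refine hsol.isMatchingSchedule.traj_succ_of_swap (u := enfInit s t r) ?_ ?_ hv
  · rw [hsol.traj_enfInit t r (by omega), posE, if_pos (by omega)]
    congr 3
    omega
  · rw [hsol.traj_enfInit t r (by omega), posE, if_neg (by omega), if_pos hρ.symm]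

-- In round `d - 1` the root receives `e_d` itself, so no other token can enter it then.
theorem IsSolution.exists_dOf_of_traj_succ_eq_none (hsol : IsSolution s π (8 * n) sched)
    {v : PV m n} (hv : ∀ t r, v ≠ enfInit s t r) {ρ : ℕ} (hρ : ρ < 8 * n)
    (h : traj sched v (ρ + 1) = none) :
    ∃ t r, dOf t r = ρ ∧ traj sched v ρ = some (yB s t r, 0) := by
  rcases Nat.mod_two_eq_zero_or_one ρ with heven | hodd
  · obtain ⟨t, r, hd⟩ := exists_dOf_eq (n := n) (ρ := ρ + 1) (by omega) (by omega)
    refine absurd (traj_injective (ρ + 1) (h.trans ?_)) (hv t r)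
    show none = traj sched (enfInit s t r) (ρ + 1)
    rw [← hd, hsol.traj_enfInit t r (dOf_lt t r).le, posE, if_neg (by omega), if_pos rfl]
  · obtain ⟨t, r, hd⟩ := exists_dOf_eq hodd hρ
    refine ⟨t, r, hd, hsol.isMatchingSchedule.traj_of_swap (u := enfInit s t r) ?_ ?_ h⟩
    · rw [hsol.traj_enfInit t r hρ.le, posE, if_neg (by omega), if_pos hd.symm]
    · rw [hsol.traj_enfInit t r (by omega), posE, if_neg (by omega), if_neg (by omega)]
      congr 3
      omega

theorem IsSolution.exists_exit_item (hsol : IsSolution s π (8 * n) sched) (o : Option (Fin m))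
    (b : Branch m n) {τ₁ τ₂ : ℕ} (h12 : τ₁ ≤ τ₂) (hτ₂ : τ₂ ≤ 8 * n)
    (h₁ : OnBranch b (traj sched (itemInit s o) τ₁))
    (h₂ : ¬ OnBranch b (traj sched (itemInit s o) τ₂)) :
    ∃ t r, τ₁ ≤ dOf t r ∧ dOf t r < τ₂ ∧ yB s t r = b ∧
      traj sched (itemInit s o) (dOf t r + 1) = none := by
  obtain ⟨ρ, h1, h2, hb, hnone⟩ := hsol.isMatchingSchedule.exists_exit _ b h12 h₁ h₂
  obtain ⟨t, r, rfl, hy⟩ :=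
    hsol.exists_dOf_of_traj_succ_eq_none (itemInit_ne_enfInit s o) (by omega) hnone
  rw [hb] at hy
  exact ⟨t, r, h1, h2, by simpa using hy.symm, hnone⟩

theorem IsSolution.exists_aFun_of_onBranch_final (hsol : IsSolution s π (8 * n) sched)
    (o : Option (Fin m)) {b : Branch m n} (h : OnBranch b (traj sched (itemInit s o) (8 * n))) :
    ∃ j, b = Sum.inr (Sum.inl (aFun s n j)) := by
  obtain ⟨c, hc⟩ := h
  have hfin := hsol.traj_final (Sum.inl o)
  rw [initP, hc] at hfin
  rcases hπ : π o with _ | j <;> simp [tgtP, hπ] at hfin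
  exact ⟨j, hfin.1⟩

/-- `p` stands for the star vertex `x` after the first `t` swaps: the center is the root and
the leaf `i` is the slot branch `s^{a(i,t)}`. -/
def Represents (s : Fin n → Fin m) (t : ℕ) : Option (Fin m) → PV m n → Prop
  | none, p => p = none
  | some i, p => OnBranch (Sum.inr (Sum.inl (aFun s t i))) p

theorem IsSolution.eq_of_represents_final (hsol : IsSolution s π (8 * n) sched)
    (o : Option (Fin m)) {x : Option (Fin m)}
    (h : Represents s n x (traj sched (itemInit s o) (8 * n))) : x = π o := by
  have hfin := hsol.traj_final (Sum.inl o)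
  rw [initP] at hfin
  rcases x with _ | i
  · rw [Represents] at h
    rw [h] at hfin
    rcases hπ : π o with _ | j <;> simp [tgtP, hπ] at hfin ⊢
  · obtain ⟨c, hc⟩ := h
    rw [hc] at hfin
    rcases hπ : π o with _ | j <;> simp [tgtP, hπ] at hfin
    rw [aFun_injective s n hfin.1]

theorem IsSolution.traj_eq_none_of_onBranch_slot (hsol : IsSolution s π (8 * n) sched)
    (o : Option (Fin m)) (t : Fin n) {τ : ℕ} (hτ : τ ≤ 8 * n)
    (h : OnBranch (Sum.inr (Sum.inl (aFun s t (s t)))) (traj sched (itemInit s o) τ)) :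
    traj sched (itemInit s o) (8 * t + 2) = none := by
  have hfin : ¬ OnBranch (Sum.inr (Sum.inl (aFun s t (s t)))) (traj sched (itemInit s o) (8 * n)) :=
    fun hf => by
      obtain ⟨j, hj⟩ := hsol.exists_aFun_of_onBranch_final o hf
      simp only [Sum.inr.injEq, Sum.inl.injEq] at hj
      exact aFun_ne_of_lt s t t.isLt j hj.symm
  obtain ⟨t', r, -, -, hy, hnone⟩ := hsol.exists_exit_item o _ hτ le_rfl h hfin
  obtain ⟨hr, ha⟩ := (yB_eq_slot_iff s t' r _).1 hy
  obtain rfl := aFun_self_injective s ha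
  rwa [show dOf t' r + 1 = 8 * t' + 2 by simp only [dOf]; omega] at hnone

theorem IsSolution.traj_eq_none_of_onBranch_swap (hsol : IsSolution s π (8 * n) sched)
    (o : Option (Fin m)) (t : Fin n) {τ : ℕ} (hτ : τ ≤ 8 * n)
    (h : OnBranch (Sum.inl t) (traj sched (itemInit s o) τ)) :
    traj sched (itemInit s o) (8 * t + 6) = none ∨
      traj sched (itemInit s o) (8 * (t + 1)) = none := by
  have hfin : ¬ OnBranch (Sum.inl t) (traj sched (itemInit s o) (8 * n)) := fun hf => by
    obtain ⟨j, hj⟩ := hsol.exists_aFun_of_onBranch_final o hf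
    cases hj
  obtain ⟨t', r, -, -, hy, hnone⟩ := hsol.exists_exit_item o _ hτ le_rfl h hfin
  obtain ⟨hr, rfl⟩ := (yB_eq_inl_iff s t' t r).1 hy
  rcases (show (r : ℕ) = 2 ∨ (r : ℕ) = 3 by omega) with hr | hr
  · exact Or.inl (by rwa [show dOf t' r + 1 = 8 * t' + 6 by simp only [dOf]; omega] at hnone)
  · exact Or.inr (by rwa [show dOf t' r + 1 = 8 * (t' + 1) by simp only [dOf]; omega] at hnone)

theorem IsSolution.represents_of_traj_eq_none (hsol : IsSolution s π (8 * n) sched)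
    (o : Option (Fin m)) (t : Fin n) (h6 : traj sched (itemInit s o) (8 * t + 6) = none)
    (h8 : traj sched (itemInit s o) (8 * (t + 1)) ≠ none) :
    Represents s (t + 1) (some (s t)) (traj sched (itemInit s o) (8 * (t + 1))) := by
  have h7 : traj sched (itemInit s o) (8 * t + 7) = some (xB s t 3, 0) := by
    simpa [dOf] using hsol.traj_dOf_of_root t 3 (by simpa [dOf] using h6)
  rw [Represents, aFun_succ_self]
  by_contra hno
  obtain ⟨ρ, h1, h2, -, hnone⟩ :=
    hsol.isMatchingSchedule.exists_exit _ _ (by omega) ⟨0, h7.trans (by simp [xB])⟩ hno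
  obtain rfl : ρ = 8 * t + 7 := by omega
  exact h8 hnone

theorem IsSolution.represents_succ_of_ne (hsol : IsSolution s π (8 * n) sched)
    (o : Option (Fin m)) (t : Fin n) {i : Fin m} (hi : s t ≠ i)
    (h : Represents s t (some i) (traj sched (itemInit s o) (8 * t))) :
    Represents s (t + 1) (some i) (traj sched (itemInit s o) (8 * (t + 1))) := by
  rw [Represents, aFun_succ_of_ne s t hi]
  by_contra hno
  obtain ⟨t', r, h1, h2, hy, -⟩ :=
    hsol.exists_exit_item o _ (by omega) (by have := t.isLt; omega) h hno
  obtain ⟨-, ha⟩ := (yB_eq_slot_iff s t' r _).1 hy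
  obtain rfl : t' = t := by
    simp only [dOf] at h1 h2
    exact Fin.ext (by omega)
  exact hi (aFun_injective s _ ha)

-- Both tokens are pushed onto `w^t`, which they can only leave in rounds `8t + 5` and `8t + 7`.
theorem IsSolution.swap_round (hsol : IsSolution s π (8 * n) sched) (t : Fin n)
    {oT oA : Option (Fin m)} (hTA : oT ≠ oA)
    (hT : traj sched (itemInit s oT) (8 * t) = none)
    (hA : OnBranch (Sum.inr (Sum.inl (aFun s t (s t)))) (traj sched (itemInit s oA) (8 * t))) :
    (Represents s (t + 1) none (traj sched (itemInit s oT) (8 * (t + 1))) ∧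
        Represents s (t + 1) (some (s t)) (traj sched (itemInit s oA) (8 * (t + 1)))) ∨
      (Represents s (t + 1) (some (s t)) (traj sched (itemInit s oT) (8 * (t + 1))) ∧
        Represents s (t + 1) none (traj sched (itemInit s oA) (8 * (t + 1)))) := by
  have hK := t.isLt
  have hT1 : traj sched (itemInit s oT) (8 * t + 1) = some (Sum.inl t, 0) := by
    simpa [dOf, xB] using hsol.traj_dOf_of_root t 0 (by simpa [dOf] using hT)
  have hA2 := hsol.traj_eq_none_of_onBranch_slot oA t (by omega) hA
  have hA3 : traj sched (itemInit s oA) (8 * t + 3) = some (Sum.inl t, 0) := by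
    simpa [dOf, xB] using hsol.traj_dOf_of_root t 1 (by simpa [dOf] using hA2)
  have hne : ∀ τ, traj sched (itemInit s oT) τ ≠ traj sched (itemInit s oA) τ :=
    fun τ h => hTA (itemInit_injective s (traj_injective τ h))
  rcases hsol.traj_eq_none_of_onBranch_swap oT t (by omega) ⟨0, hT1⟩ with hT6 | hT8 <;>
    rcases hsol.traj_eq_none_of_onBranch_swap oA t (by omega) ⟨0, hA3⟩ with hA6 | hA8
  · exact absurd (hT6.trans hA6.symm) (hne _)
  · exact Or.inr ⟨hsol.represents_of_traj_eq_none oT t hT6 (hA8 ▸ hne _), hA8⟩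
  · exact Or.inl ⟨hT8, hsol.represents_of_traj_eq_none oA t hA6 (hT8 ▸ (hne _).symm)⟩
  · exact absurd (hT8.trans hA8.symm) (hne _)

theorem IsSolution.represents_succ (hsol : IsSolution s π (8 * n) sched) (t : Fin n)
    {σ : List (Fin m)}
    (h : ∀ o, Represents s t (starApply σ id o) (traj sched (itemInit s o) (8 * t))) :
    (∀ o, Represents s (t + 1) (starApply σ id o) (traj sched (itemInit s o) (8 * (t + 1)))) ∨
      ∀ o, Represents s (t + 1) (starApply (σ ++ [s t]) id o)
        (traj sched (itemInit s o) (8 * (t + 1))) := by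
  have hf := starApply_bijective σ Function.bijective_id
  obtain ⟨oT, hoT⟩ := hf.2 none
  obtain ⟨oA, hoA⟩ := hf.2 (some (s t))
  have hTA : oT ≠ oA := by
    rintro rfl
    cases hoT.symm.trans hoA
  have hT := h oT
  have hA := h oA
  rw [hoT] at hT
  rw [hoA] at hA
  have hrest : ∀ o, o ≠ oT → o ≠ oA → ∃ i, starApply σ id o = some i ∧ s t ≠ i ∧
      Represents s (t + 1) (some i) (traj sched (itemInit s o) (8 * (t + 1))) := by
    intro o h1 h2
    rcases hfo : starApply σ id o with _ | i
    · exact absurd (hf.1 (hfo.trans hoT.symm)) h1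
    · have hi : s t ≠ i := fun hi => h2 (hf.1 (hfo.trans (hi ▸ hoA.symm)))
      exact ⟨i, rfl, hi, hsol.represents_succ_of_ne o t hi (hfo ▸ h o)⟩
  rw [starApply_append_singleton]
  rcases hsol.swap_round t hTA hT hA with ⟨hT', hA'⟩ | ⟨hT', hA'⟩
  · refine Or.inl fun o => ?_
    by_cases h1 : o = oT
    · rwa [h1, hoT]
    by_cases h2 : o = oA
    · rwa [h2, hoA]
    obtain ⟨i, hi, -, hrep⟩ := hrest o h1 h2
    rwa [hi]
  · refine Or.inr fun o => ?_
    by_cases h1 : o = oT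
    · simpa [h1, hoT, swapV] using hT'
    by_cases h2 : o = oA
    · simpa [h2, hoA, swapV] using hA'
    obtain ⟨i, hi, hne, hrep⟩ := hrest o h1 h2
    simpa [hi, swapV, Ne.symm hne] using hrep

theorem IsSolution.exists_sublist_represents (hsol : IsSolution s π (8 * n) sched) {t : ℕ}
    (ht : t ≤ n) : ∃ σ : List (Fin m), σ.Sublist ((List.ofFn s).take t) ∧
      ∀ o, Represents s t (starApply σ id o) (traj sched (itemInit s o) (8 * t)) := by
  induction t with
  | zero =>
    refine ⟨[], List.nil_sublist _, fun o => ?_⟩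
    rcases o with _ | i
    · rfl
    · exact ⟨0, rfl⟩
  | succ t ih =>
    obtain ⟨σ, hσ, hrep⟩ := ih (by omega)
    replace ht : t < n := ht
    have htake : (List.ofFn s).take (t + 1) = (List.ofFn s).take t ++ [s ⟨t, ht⟩] := by
      simp [List.take_add_one, ht]
    rcases hsol.represents_succ ⟨t, ht⟩ hrep with h | h
    · exact ⟨σ, htake ▸ hσ.trans (List.sublist_append_left _ _), h⟩
    · exact ⟨σ ++ [s ⟨t, ht⟩], htake ▸ hσ.append_right _, h⟩

end Solution

theorem parallel_solution_implies_starSTS_yes {m n : ℕ}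
    (s : Fin n → Fin m) (π : Equiv.Perm (Option (Fin m)))
    (sched : List (List (PV m n × PV m n)))
    (hsol : IsSolution s π (8 * n) sched) :
    StarSTSYes π (List.ofFn s) := by
  obtain ⟨σ, hσ, hrep⟩ := hsol.exists_sublist_represents le_rfl
  rw [List.take_of_length_le (by simp)] at hσ
  exact ⟨σ, hσ, funext fun o => hsol.eq_of_represents_final o (hrep o)⟩

end ParallelTS
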